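/- arXiv:2109.09147 — 4 statements merged into one kernel-verified Lean document; each statement's English description precedes it below -/
import Mathlib

section
/- Let M = [[A,B],[C,Aᵀ]] be a 2n×2n real matrix with B = Bᵀ, C = Cᵀ, AB = BAᵀ, AᵀC = CA, A² - BC = I. Then the characteristic polynomial of M satisfies p_M(t) = det(t²I - 2tA + I) for all t. -/
/-!
Write `P = tI - A`. Multiplying `tI - M = [[P, -B], [-C, Pᵀ]]` on the left by `[[P, B], [0, I]]`
clears the upper right block, because `A B = B Aᵀ` says exactly `P B = B Pᵀ`. Hence
`det P · p_M(t) = det P · det (P² - B C)`, and `P² - B C = (t² + 1) I - 2 t A` since `B C = A² - I`.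
Cancelling `det P` is legitimate in `R[X]`, where `det P` is the monic polynomial `p_A`.
-/

open Matrix Polynomial

theorem Matrix.det_fromBlocks_of_mul_eq_mul {m R : Type*} [Fintype m] [DecidableEq m]
    [CommRing R] {A B C D : Matrix m m R} (hAB : A * B = B * D) (hD : D.det = A.det)
    (hA : IsLeftRegular A.det) :
    (fromBlocks A B C D).det = (A * A - B * C).det := by
  have hclear : fromBlocks A (-B) 0 1 * fromBlocks A B C D = fromBlocks (A * A - B * C) 0 C D := by
    rw [fromBlocks_multiply]
    congr 1 <;> simp [hAB, sub_eq_add_neg]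
  have h := congrArg det hclear
  rw [det_mul, det_fromBlocks_zero₂₁, det_fromBlocks_zero₁₂, det_one, mul_one, hD] at h
  exact hA (h.trans (mul_comm _ _))

theorem Matrix.charpoly_fromBlocks_transpose {m R : Type*} [Fintype m] [DecidableEq m]
    [CommRing R] {A B : Matrix m m R} (C : Matrix m m R) (hAB : A * B = B * Aᵀ) :
    (fromBlocks A B C Aᵀ).charpoly
      = (charmatrix A * charmatrix A - (B * C).map Polynomial.C).det := by
  have hAB' : charmatrix A * -B.map Polynomial.C = -B.map Polynomial.C * (charmatrix A)ᵀ := by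
    rw [charmatrix, RingHom.mapMatrix_apply, transpose_sub, scalar_apply, diagonal_transpose,
      ← scalar_apply, Matrix.mul_neg, Matrix.neg_mul, sub_mul, mul_sub,
      (scalar_commute X (Commute.all X) _).eq, ← Matrix.map_mul, hAB, Matrix.map_mul,
      transpose_map]
  rw [charpoly, charmatrix_fromBlocks, charmatrix_transpose,
    det_fromBlocks_of_mul_eq_mul hAB' (det_transpose _) A.charpoly_monic.isRegular.left,
    Matrix.neg_mul, Matrix.mul_neg, neg_neg, Matrix.map_mul]

theorem Matrix.charmatrix_map_evalRingHom {m R : Type*} [Fintype m] [DecidableEq m]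
    [CommRing R] (A : Matrix m m R) (t : R) :
    (charmatrix A).map (evalRingHom t) = scalar m t - A := by
  ext i j
  obtain rfl | hij := eq_or_ne i j <;> simp [*]

theorem stmt_3_general (n : ℕ) (A B C : Matrix (Fin n) (Fin n) ℝ)
    (hAB : A * B = B * Aᵀ)
    (hABC : A * A - B * C = 1) :
    ∀ t : ℝ, (fromBlocks A B C Aᵀ).charpoly.eval t
      = ((t ^ 2 + 1) • (1 : Matrix (Fin n) (Fin n) ℝ) - (2 * t) • A).det := by
  intro t
  have hBC : B * C = A * A - 1 := by rw [← hABC, sub_sub_cancel]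
  rw [charpoly_fromBlocks_transpose C hAB, ← coe_evalRingHom, RingHom.map_det, map_sub, map_mul,
    RingHom.mapMatrix_apply, RingHom.mapMatrix_apply, charmatrix_map_evalRingHom, Matrix.map_map]
  simp only [coe_evalRingHom, Function.comp_def, eval_C, Matrix.map_id', hBC, scalar_apply,
    ← smul_one_eq_diagonal]
  congr 1
  simp only [sub_mul, mul_sub, Matrix.smul_mul, Matrix.mul_smul, Matrix.one_mul, Matrix.mul_one]
  module

theorem stmt_3 (n : ℕ) (A B C : Matrix (Fin n) (Fin n) ℝ)
    (hB : Bᵀ = B) (hC : Cᵀ = C)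
    (hAB : A * B = B * Aᵀ) (hAC : Aᵀ * C = C * A)
    (hABC : A * A - B * C = 1) :
    ∀ t : ℝ, (fromBlocks A B C Aᵀ).charpoly.eval t
      = ((t ^ 2 + 1) • (1 : Matrix (Fin n) (Fin n) ℝ) - (2 * t) • A).det :=
  stmt_3_general n A B C hAB hABC
end

section
/- Let M = [[A,B],[C,Aᵀ]] be a 4×4 real matrix with 2×2 blocks satisfying B = Bᵀ, C = Cᵀ, AB = BAᵀ, AᵀC = CA, A² - BC = I. Then the characteristic polynomial of M is p_M(t) = t⁴ - 2(tr A) t³ + 2(1 + 2 det A) t² - 2(tr A) t + 1. -/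
open Matrix Polynomial

private lemma charpoly_eval_aux {n : Type*} [Fintype n] [DecidableEq n]
    (M : Matrix n n ℝ) (t : ℝ) :
    M.charpoly.eval t = (t • (1 : Matrix n n ℝ) - M).det := by
  rw [Matrix.charpoly, _root_.eval_det, Matrix.matPolyEquiv_charmatrix]
  rw [eval_sub, eval_X, eval_C]
  congr 1
  rw [Matrix.scalar_apply, Matrix.smul_one_eq_diagonal]

theorem stmt_4 (A B C : Matrix (Fin 2) (Fin 2) ℝ)
    (hB : Bᵀ = B) (hC : Cᵀ = C)
    (hAB : A * B = B * Aᵀ) (hAC : Aᵀ * C = C * A)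
    (hABC : A * A - B * C = 1) :
    ∀ t : ℝ, (fromBlocks A B C Aᵀ).charpoly.eval t
      = t ^ 4 - 2 * A.trace * t ^ 3 + 2 * (1 + 2 * A.det) * t ^ 2
        - 2 * A.trace * t + 1 := by
  set p : Polynomial ℝ := (fromBlocks A B C Aᵀ).charpoly with hp
  set Q : Polynomial ℝ := X^4 - Polynomial.C (2*A.trace) * X^3
      + Polynomial.C (2*(1+2*A.det)) * X^2 - Polynomial.C (2*A.trace) * X + 1 with hQ
  have hABC' : Aᵀ * Aᵀ - C * B = 1 := by
    calc Aᵀ * Aᵀ - C * B = (A * A - B * C)ᵀ := by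
          rw [Matrix.transpose_sub, Matrix.transpose_mul, Matrix.transpose_mul, hB, hC]
    _ = 1 := by rw [hABC, Matrix.transpose_one]
  -- the pointwise squared identity
  have hsq : ∀ t : ℝ, (p.eval t)^2 = (Q.eval t)^2 := by
    intro t
    have hN : t • (1 : Matrix (Fin 2 ⊕ Fin 2) (Fin 2 ⊕ Fin 2) ℝ) - fromBlocks A B C Aᵀ
        = fromBlocks (t • 1 - A) (-B) (-C) (t • 1 - Aᵀ) := by
      ext (i|i) (j|j) <;> simp [fromBlocks, one_apply]
    have hN' : t • (1 : Matrix (Fin 2 ⊕ Fin 2) (Fin 2 ⊕ Fin 2) ℝ) - fromBlocks A (-B) (-C) Aᵀ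
        = fromBlocks (t • 1 - A) B C (t • 1 - Aᵀ) := by
      ext (i|i) (j|j) <;> simp [fromBlocks, one_apply]
    have key : ∀ X Y Z : Matrix (Fin 2) (Fin 2) ℝ, X * X - Y * Z = 1 →
        (t • 1 - X) * (t • 1 - X) + -Y * Z = (t^2+1) • 1 - (2*t) • X := by
      intro X Y Z h
      have expand : (t • 1 - X) * (t • 1 - X) = (t*t) • 1 - (2*t) • X + X * X := by
        rw [sub_mul, mul_sub, mul_sub, smul_mul_smul_comm, mul_one, smul_mul_assoc, one_mul,
          mul_smul_comm, mul_one, two_mul, add_smul]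
        abel
      rw [expand, neg_mul, ← sub_eq_add_neg, add_sub_assoc, h, add_smul, one_smul, sq]
      abel
    -- product of the two "twisted" resolvents is block diagonal
    have hprod : (t • (1 : Matrix (Fin 2 ⊕ Fin 2) (Fin 2 ⊕ Fin 2) ℝ) - fromBlocks A B C Aᵀ) *
        (t • 1 - fromBlocks A (-B) (-C) Aᵀ)
        = fromBlocks ((t^2+1) • 1 - (2*t) • A) 0 0 ((t^2+1) • 1 - (2*t) • Aᵀ) := by
      rw [hN, hN', Matrix.fromBlocks_multiply, Matrix.fromBlocks_inj]
      refine ⟨key A B C hABC, ?_, ?_, (add_comm _ _).trans (key Aᵀ C B hABC')⟩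
      · rw [sub_mul, neg_mul, mul_sub, smul_mul_assoc, one_mul, mul_smul_comm, mul_one, hAB]
        abel
      · rw [neg_mul, mul_sub, sub_mul, smul_mul_assoc, one_mul, mul_smul_comm, mul_one, hAC]
        abel
    -- the two factors have the same determinant (conjugation by diag(1,1,-1,-1))
    have hdet2 : (t • (1 : Matrix (Fin 2 ⊕ Fin 2) (Fin 2 ⊕ Fin 2) ℝ)
        - fromBlocks A (-B) (-C) Aᵀ).det
        = (t • (1 : Matrix (Fin 2 ⊕ Fin 2) (Fin 2 ⊕ Fin 2) ℝ) - fromBlocks A B C Aᵀ).det := by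
      set D : Matrix (Fin 2 ⊕ Fin 2) (Fin 2 ⊕ Fin 2) ℝ := fromBlocks 1 0 0 (-1) with hD
      have hDD : D * D = 1 := by
        rw [hD, Matrix.fromBlocks_multiply]
        simp [Matrix.fromBlocks_one]
      have hconj : D * (t • (1 : Matrix (Fin 2 ⊕ Fin 2) (Fin 2 ⊕ Fin 2) ℝ)
          - fromBlocks A B C Aᵀ) * D = t • 1 - fromBlocks A (-B) (-C) Aᵀ := by
        rw [hN, hN', hD, Matrix.fromBlocks_multiply, Matrix.fromBlocks_multiply]
        simp
      calc (t • (1 : Matrix (Fin 2 ⊕ Fin 2) (Fin 2 ⊕ Fin 2) ℝ)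
            - fromBlocks A (-B) (-C) Aᵀ).det
          = (D * (t • 1 - fromBlocks A B C Aᵀ) * D).det := by rw [hconj]
        _ = D.det * D.det * (t • 1 - fromBlocks A B C Aᵀ).det := by
            rw [Matrix.det_mul, Matrix.det_mul]; ring
        _ = (t • 1 - fromBlocks A B C Aᵀ).det := by
            rw [← Matrix.det_mul, hDD, Matrix.det_one, one_mul]
    have hdetblock : ((t^2+1) • (1 : Matrix (Fin 2) (Fin 2) ℝ) - (2*t) • A).det
        = Q.eval t := by
      rw [Matrix.det_fin_two, hQ]
      simp [Matrix.trace_fin_two, Matrix.det_fin_two, one_apply]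
      ring
    have hdetblockT : ((t^2+1) • (1 : Matrix (Fin 2) (Fin 2) ℝ) - (2*t) • Aᵀ).det
        = Q.eval t := by
      rw [← hdetblock, ← Matrix.det_transpose (((t^2+1) • (1 : Matrix (Fin 2) (Fin 2) ℝ)
        - (2*t) • A))]
      congr 1
      rw [Matrix.transpose_sub, Matrix.transpose_smul, Matrix.transpose_smul,
        Matrix.transpose_one]
    calc (p.eval t)^2
        = (t • (1 : Matrix (Fin 2 ⊕ Fin 2) (Fin 2 ⊕ Fin 2) ℝ) - fromBlocks A B C Aᵀ).det *
          (t • 1 - fromBlocks A (-B) (-C) Aᵀ).det := by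
          rw [hp, charpoly_eval_aux, hdet2, sq]
      _ = ((t • (1 : Matrix (Fin 2 ⊕ Fin 2) (Fin 2 ⊕ Fin 2) ℝ) - fromBlocks A B C Aᵀ) *
          (t • 1 - fromBlocks A (-B) (-C) Aᵀ)).det := (Matrix.det_mul _ _).symm
      _ = (Q.eval t)^2 := by
          rw [hprod, Matrix.det_fromBlocks_zero₂₁, hdetblock, hdetblockT, sq]
  -- upgrade to a polynomial identity
  have hpolysq : p^2 = Q^2 := by
    apply Polynomial.funext
    intro t
    simpa using hsq t
  have hfac : (p - Q) * (p + Q) = 0 := by linear_combination hpolysq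
  have hcoeff4 : p.coeff 4 = 1 := by
    have hmon : p.Monic := Matrix.charpoly_monic _
    have hdeg : p.natDegree = 4 := by
      rw [hp, Matrix.charpoly_natDegree_eq_dim]
      simp
    rw [← hdeg]; exact hmon.coeff_natDegree
  have hQcoeff4 : Q.coeff 4 = 1 := by
    rw [hQ]
    simp [mul_assoc, add_mul, mul_add, coeff_C_mul, coeff_one, coeff_X, coeff_X_pow]
  have hpQ : p = Q := by
    rcases mul_eq_zero.mp hfac with h | h
    · exact sub_eq_zero.mp h
    · exfalso
      have : p = -Q := eq_neg_of_add_eq_zero_left h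
      have : p.coeff 4 = -(Q.coeff 4) := by rw [this]; simp
      rw [hcoeff4, hQcoeff4] at this
      norm_num at this
  intro t
  rw [hpQ, hQ]
  simp
end

section
/- Two real n×n matrices A and B have intersecting conjugation-orbit closures (i.e. the closures of {RAR⁻¹ : R ∈ GL_n(ℝ)} and {RBR⁻¹ : R ∈ GL_n(ℝ)} intersect) if and only if A and B have the same characteristic polynomial. -/
open Matrix Polynomial

section OrbAux
variable {ι κ : Type*} [Fintype ι] [DecidableEq ι] [Fintype κ] [DecidableEq κ]


def orbX (A : Matrix ι ι ℝ) : Set (Matrix ι ι ℝ) :=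
  {M | ∃ R : Matrix ι ι ℝ, IsUnit R.det ∧ M = R * A * R⁻¹}

lemma orbX_self (A : Matrix ι ι ℝ) : A ∈ orbX A :=
  ⟨1, by simp, by simp⟩

lemma conj_mem_orbX {A : Matrix ι ι ℝ} (R : Matrix ι ι ℝ) (hR : IsUnit R.det) :
    R * A * R⁻¹ ∈ orbX A := ⟨R, hR, rfl⟩

lemma orbX_subset {A M : Matrix ι ι ℝ} (h : M ∈ orbX A) : orbX M ⊆ orbX A := by
  obtain ⟨R, hR, rfl⟩ := h
  rintro _ ⟨S, hS, rfl⟩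
  refine ⟨S * R, by simp [hS.mul hR, hS.ne_zero, hR.ne_zero], ?_⟩
  rw [Matrix.mul_inv_rev]
  simp only [Matrix.mul_assoc]

lemma orbX_symm {A M : Matrix ι ι ℝ} (h : M ∈ orbX A) : A ∈ orbX M := by
  obtain ⟨R, hR, rfl⟩ := h
  refine ⟨R⁻¹, (isUnit_nonsing_inv_det_iff).2 hR, ?_⟩
  rw [nonsing_inv_nonsing_inv R hR]
  calc A = (R⁻¹ * R) * A * (R⁻¹ * R) := by rw [Matrix.nonsing_inv_mul R hR]; simp
  _ = R⁻¹ * (R * A * R⁻¹) * R := by simp only [Matrix.mul_assoc]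

lemma closure_orbX_subset {A M : Matrix ι ι ℝ} (h : M ∈ closure (orbX A)) :
    closure (orbX M) ⊆ closure (orbX A) := by
  refine closure_minimal ?_ isClosed_closure
  rintro _ ⟨S, hS, rfl⟩
  have hc : Continuous fun X : Matrix ι ι ℝ => S * X * S⁻¹ :=
    (continuous_const.matrix_mul continuous_id).matrix_mul continuous_const
  have himg : (fun X : Matrix ι ι ℝ => S * X * S⁻¹) '' orbX A ⊆ orbX A := by
    rintro _ ⟨X, hX, rfl⟩
    exact orbX_subset hX (conj_mem_orbX S hS)
  have : S * M * S⁻¹ ∈ closure ((fun X : Matrix ι ι ℝ => S * X * S⁻¹) '' orbX A) :=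
    (image_closure_subset_closure_image hc) ⟨M, h, rfl⟩
  exact closure_mono himg this



lemma evalCharpoly (M : Matrix ι ι ℝ) (x : ℝ) :
    (Matrix.charpoly M).eval x = ((x • (1 : Matrix ι ι ℝ)) - M).det := by
  rw [Matrix.charpoly, ← coe_evalRingHom, RingHom.map_det]
  congr 1
  ext i j
  by_cases h : i = j
  · subst h; simp [charmatrix_apply_eq, Matrix.one_apply]
  · simp [charmatrix_apply_ne _ _ _ h, Matrix.one_apply, h]

lemma charpoly_eq_of_mem_closure {A M : Matrix ι ι ℝ} (h : M ∈ closure (orbX A)) :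
    Matrix.charpoly M = Matrix.charpoly A := by
  apply Polynomial.funext
  intro x
  rw [evalCharpoly, evalCharpoly]
  have hcont : Continuous fun X : Matrix ι ι ℝ => ((x • (1 : Matrix ι ι ℝ)) - X).det :=
    (continuous_const.sub continuous_id).matrix_det
  have hcl : IsClosed {X : Matrix ι ι ℝ |
      ((x • (1 : Matrix ι ι ℝ)) - X).det = ((x • (1 : Matrix ι ι ℝ)) - A).det} :=
    isClosed_eq hcont continuous_const
  refine closure_minimal ?_ hcl h
  rintro _ ⟨R, hR, rfl⟩
  have h1 : (x • (1 : Matrix ι ι ℝ)) - R * A * R⁻¹ = R * ((x • 1) - A) * R⁻¹ := by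
    rw [Matrix.mul_sub, Matrix.sub_mul]
    congr 1
    rw [Matrix.mul_smul, Matrix.mul_one, Matrix.smul_mul, Matrix.mul_nonsing_inv R hR]
  show ((x • (1 : Matrix ι ι ℝ)) - R * A * R⁻¹).det = _
  rw [h1, Matrix.det_mul, Matrix.det_mul, mul_comm, ← mul_assoc, ← Matrix.det_mul,
    Matrix.nonsing_inv_mul R hR, Matrix.det_one, one_mul]



lemma reindex_mul (e : ι ≃ κ) (X Y : Matrix ι ι ℝ) :
    reindex e e (X * Y) = reindex e e X * reindex e e Y := by
  simp [reindex_apply, submatrix_mul_equiv]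

lemma orbX_reindex (e : ι ≃ κ) {A M : Matrix ι ι ℝ} (h : M ∈ orbX A) :
    reindex e e M ∈ orbX (reindex e e A) := by
  obtain ⟨R, hR, rfl⟩ := h
  refine ⟨reindex e e R, by rwa [det_reindex_self], ?_⟩
  rw [inv_reindex, ← reindex_mul, ← reindex_mul]

lemma closure_orbX_reindex (e : ι ≃ κ) {A M : Matrix ι ι ℝ} (h : M ∈ closure (orbX A)) :
    reindex e e M ∈ closure (orbX (reindex e e A)) := by
  have hc : Continuous fun X : Matrix ι ι ℝ => reindex e e X :=
    continuous_id.matrix_reindex e e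
  have := (image_closure_subset_closure_image hc) ⟨M, h, rfl⟩
  refine closure_mono ?_ this
  rintro _ ⟨X, hX, rfl⟩
  exact orbX_reindex e hX



lemma killX (C : Matrix ι ι ℝ) (X : Matrix ι κ ℝ) (D : Matrix κ κ ℝ) :
    fromBlocks C 0 0 D ∈ closure (orbX (fromBlocks C X 0 D)) := by
  have key : ∀ a : ℝ, a ≠ 0 →
      fromBlocks C (a • X) 0 D ∈ orbX (fromBlocks C X 0 D) := by
    intro a ha
    set R : Matrix (ι ⊕ κ) (ι ⊕ κ) ℝ := fromBlocks (a • 1) 0 0 1 with hRdef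
    have hRinv : R⁻¹ = fromBlocks (a⁻¹ • (1 : Matrix ι ι ℝ)) 0 0 1 := by
      apply inv_eq_right_inv
      rw [hRdef, fromBlocks_multiply]
      simp [smul_smul, mul_inv_cancel₀ ha, inv_mul_cancel₀ ha, ← fromBlocks_one]
    have hdet : IsUnit R.det := by
      rw [hRdef, det_fromBlocks_zero₂₁]
      simp [Matrix.det_smul, isUnit_iff_ne_zero, pow_ne_zero, ha]
    refine ⟨R, hdet, ?_⟩
    rw [hRinv, hRdef, fromBlocks_multiply, fromBlocks_multiply]
    simp [Matrix.smul_mul, Matrix.mul_smul, smul_smul, mul_inv_cancel₀ ha,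
      mul_comm a⁻¹ a, inv_mul_cancel₀ ha]
  have hg : Continuous fun a : ℝ => fromBlocks C (a • X) 0 D :=
    Continuous.matrix_fromBlocks continuous_const (continuous_id.smul continuous_const)
      continuous_const continuous_const
  have htend : Filter.Tendsto (fun a : ℝ => fromBlocks C (a • X) 0 D)
      (nhdsWithin (0:ℝ) {(0:ℝ)}ᶜ) (nhds (fromBlocks C 0 0 D)) := by
    have h0 := (hg.tendsto 0).mono_left (nhdsWithin_le_nhds (s := {(0:ℝ)}ᶜ))
    simpa using h0
  exact mem_closure_of_tendsto htend
    (eventually_mem_nhdsWithin.mono fun a ha => key a ha)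

lemma extendBlock {A' C' : Matrix κ κ ℝ} (Q : Matrix ι ι ℝ)
    (h : C' ∈ closure (orbX A')) :
    fromBlocks Q 0 0 C' ∈ closure (orbX (fromBlocks Q 0 0 A')) := by
  have hc : Continuous fun M : Matrix κ κ ℝ => fromBlocks Q 0 0 M :=
    Continuous.matrix_fromBlocks continuous_const continuous_const continuous_const
      continuous_id
  have := (image_closure_subset_closure_image hc) ⟨C', h, rfl⟩
  refine closure_mono ?_ this
  rintro _ ⟨M, ⟨S, hS, rfl⟩, rfl⟩
  set R : Matrix (ι ⊕ κ) (ι ⊕ κ) ℝ := fromBlocks 1 0 0 S with hRdef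
  have hRinv : R⁻¹ = fromBlocks 1 0 0 S⁻¹ := by
    apply inv_eq_right_inv
    rw [hRdef, fromBlocks_multiply]
    simp [Matrix.mul_nonsing_inv S hS, ← fromBlocks_one]
  have hdet : IsUnit R.det := by
    rw [hRdef, det_fromBlocks_zero₂₁]; simpa using hS
  refine ⟨R, hdet, ?_⟩
  rw [hRinv, hRdef, fromBlocks_multiply, fromBlocks_multiply]
  simp

end OrbAux

set_option maxHeartbeats 1000000 in
section

lemma evalCharpolyC {ι : Type*} [Fintype ι] [DecidableEq ι] {R : Type*} [CommRing R]
    (M : Matrix ι ι R) (x : R) :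
    (Matrix.charpoly M).eval x = ((x • (1 : Matrix ι ι R)) - M).det := by
  rw [Matrix.charpoly, ← coe_evalRingHom, RingHom.map_det]
  congr 1
  ext i j
  by_cases h : i = j
  · subst h; simp [charmatrix_apply_eq, Matrix.one_apply]
  · simp [charmatrix_apply_ne _ _ _ h, Matrix.one_apply, h]

lemma det_aeval_eq_zero {n : ℕ} (A : Matrix (Fin n) (Fin n) ℝ) {q : ℝ[X]}
    (hq : Irreducible q) (hdvd : q ∣ A.charpoly) : (aeval A q).det = 0 := by
  set φ := algebraMap ℝ ℂ
  set qc := q.map φ with hqc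
  have hdeg : 0 < qc.degree := by
    rw [hqc, degree_map]
    exact degree_pos_of_irreducible hq
  obtain ⟨z, hz⟩ := Complex.exists_root hdeg
  obtain ⟨g, hg⟩ := (dvd_iff_isRoot.2 hz)
  set Ac := A.map φ with hAc
  -- z is a root of charpoly Ac
  have hroot : ((Matrix.charpoly A).map φ).eval z = 0 := by
    obtain ⟨r, hr⟩ := hdvd
    rw [hr, Polynomial.map_mul, eval_mul, ← hqc, eval_eq_zero_of_dvd_of_eval_eq_zero (dvd_refl qc) hz]
    ring
  have hdet1 : (Ac - z • 1).det = 0 := by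
    have h1 : ((z • (1 : Matrix (Fin n) (Fin n) ℂ)) - Ac).det = 0 := by
      rw [← evalCharpolyC, hAc, Matrix.charpoly_map A φ, hroot]
    have h2 : Ac - z • 1 = -((z • 1) - Ac) := by abel
    rw [h2, Matrix.det_neg, h1, mul_zero]
  have hmain : (aeval Ac q).det = 0 := by
    have heq : aeval Ac q = aeval Ac qc := by rw [hqc]; exact (aeval_map_algebraMap ℂ Ac q).symm
    rw [heq, hg, _root_.map_mul]
    have hX : aeval Ac (X - C z) = Ac - z • 1 := by
      simp [Algebra.algebraMap_eq_smul_one]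
    rw [hX, Matrix.det_mul, hdet1, zero_mul]
  have hmap : (aeval A q).map φ = aeval Ac q := by
    have h3 := aeval_algHom_apply ((Algebra.ofId ℝ ℂ).mapMatrix : Matrix (Fin n) (Fin n) ℝ →ₐ[ℝ] Matrix (Fin n) (Fin n) ℂ) A q
    exact (by simpa [AlgHom.mapMatrix_apply] using h3.symm : ((aeval A) q).map ⇑(Algebra.ofId ℝ ℂ) = aeval (A.map ⇑(Algebra.ofId ℝ ℂ)) q)
  have h4 : φ ((aeval A q).det) = 0 := by
    have := RingHom.map_det φ (aeval A q)
    rw [RingHom.mapMatrix_apply] at this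
    rw [this, hmap, hmain]
  exact (_root_.map_eq_zero φ).mp h4


lemma cyclic_li {n : ℕ} (A : Matrix (Fin n) (Fin n) ℝ) {q : ℝ[X]}
    (hq : Irreducible q) {v : Fin n → ℝ} (hv : v ≠ 0)
    (hker : (aeval A q).mulVec v = 0) :
    LinearIndependent ℝ (fun i : Fin q.natDegree => (A ^ (i : ℕ)).mulVec v) := by
  set d := q.natDegree with hd
  rw [Fintype.linearIndependent_iff]
  intro c hsum
  by_contra hc
  push_neg at hc
  obtain ⟨i0, hi0⟩ := hc
  set g : ℝ[X] := ∑ i : Fin d, C (c i) * X ^ (i : ℕ) with hg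
  have hgcoeff : ∀ i : Fin d, g.coeff i = c i := by
    intro i
    rw [hg, finset_sum_coeff]
    rw [Finset.sum_eq_single i]
    · simp
    · intro b _ hb
      simp only [coeff_C_mul, coeff_X_pow]
      rw [if_neg (fun h => hb (Fin.val_injective (by omega)))]
      ring
    · simp
  have hgne : g ≠ 0 := fun h => hi0 (by rw [← hgcoeff i0, h, coeff_zero])
  have hgdeg : g.degree < q.degree := by
    rw [degree_eq_natDegree hq.ne_zero, ← hd]
    refine lt_of_le_of_lt (degree_sum_le _ _) ?_
    rw [Finset.sup_lt_iff (bot_lt_iff_ne_bot.2 (by simp [degree_eq_bot, hq.ne_zero]))]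
    exact fun i _ => lt_of_le_of_lt (degree_C_mul_X_pow_le _ _) (by exact_mod_cast i.isLt)
  have hgA : (aeval A g).mulVec v = 0 := by
    rw [hg, map_sum]
    have : (∑ i : Fin d, aeval A (C (c i) * X ^ (i:ℕ))).mulVec v
        = ∑ i : Fin d, c i • (A ^ (i:ℕ)).mulVec v := by
      rw [show (∑ i : Fin d, aeval A (C (c i) * X ^ (i:ℕ))).mulVec v
          = ∑ i : Fin d, (aeval A (C (c i) * X ^ (i:ℕ))).mulVec v from
        map_sum (Matrix.mulVec.addMonoidHomLeft v) _ Finset.univ]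
      refine Finset.sum_congr rfl fun i _ => ?_
      show (aeval A (C (c i) * X ^ (i:ℕ))).mulVec v = _
      rw [_root_.map_mul, aeval_C, aeval_X_pow, ← Algebra.smul_def, Matrix.smul_mulVec]
    rw [this, hsum]
  have hndvd : ¬ q ∣ g := by
    intro hdvd
    exact absurd (Polynomial.degree_le_of_dvd hdvd hgne) (not_le.2 hgdeg)
  obtain ⟨a, b, hab⟩ := (hq.coprime_iff_not_dvd).2 hndvd
  have := congrArg (fun p => ((aeval A) p).mulVec v) hab
  simp only [map_add, _root_.map_mul, _root_.map_one, Matrix.add_mulVec, ← Matrix.mulVec_mulVec,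
    hker, hgA, Matrix.mulVec_zero, add_zero, Matrix.one_mulVec, zero_add] at this
  exact hv this.symm

noncomputable def compan (q : ℝ[X]) : Matrix (Fin q.natDegree) (Fin q.natDegree) ℝ :=
  Matrix.of fun i j =>
    if (i : ℕ) = (j : ℕ) + 1 then 1
    else if (j : ℕ) + 1 = q.natDegree then -q.coeff i else 0

lemma reduce {n : ℕ} (A : Matrix (Fin n) (Fin n) ℝ) {q : ℝ[X]}
    (hq : Irreducible q) (hmo : q.Monic) (hdvd : q ∣ A.charpoly) :
    ∃ (m : ℕ) (h : q.natDegree + m = n) (Xb : Matrix (Fin q.natDegree) (Fin m) ℝ)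
      (A' : Matrix (Fin m) (Fin m) ℝ),
      (reindex (finSumFinEquiv.trans (finCongr h)) (finSumFinEquiv.trans (finCongr h))
        (fromBlocks (compan q) Xb 0 A')) ∈ orbX A := by
  classical
  set d := q.natDegree with hd
  have hdet : (aeval A q).det = 0 := det_aeval_eq_zero A hq hdvd
  obtain ⟨v, hv, hker⟩ := (Matrix.exists_mulVec_eq_zero_iff).2 hdet
  set w : Fin d → (Fin n → ℝ) := fun i => (A ^ (i : ℕ)).mulVec v with hwdef
  have li : LinearIndependent ℝ w := cyclic_li A hq hv hker
  set W := Submodule.span ℝ (Set.range w) with hWdef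
  let bW : Module.Basis (Fin d) ℝ W := Module.Basis.span li
  obtain ⟨U, hU⟩ := Submodule.exists_isCompl W
  let bU := Module.finBasis ℝ U
  set m := Module.finrank ℝ U with hmdef
  have hWrank : Module.finrank ℝ W = d := by
    rw [hWdef, finrank_span_eq_card li, Fintype.card_fin]
  have hsum : d + m = n := by
    have h2 := Submodule.finrank_add_eq_of_isCompl hU
    rw [hWrank, Module.finrank_fin_fun] at h2
    omega
  refine ⟨m, hsum, ?_⟩
  set e : (Fin d ⊕ Fin m) ≃ Fin n := finSumFinEquiv.trans (finCongr hsum) with hedef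
  let B : Module.Basis (Fin d ⊕ Fin m) ℝ (Fin n → ℝ) :=
    (bW.prod bU).map (Submodule.prodEquivOfIsCompl W U hU)
  have hBinl : ∀ i : Fin d, B (Sum.inl i) = w i := by
    intro i
    show (Submodule.prodEquivOfIsCompl W U hU) ((bW.prod bU) (Sum.inl i)) = w i
    rw [Module.Basis.prod_apply]
    simp only [Sum.elim_inl, Function.comp_apply]
    rw [Submodule.coe_prodEquivOfIsCompl']
    simp only [LinearMap.inl_apply, Submodule.coe_zero, add_zero]
    exact congrArg Subtype.val (Module.Basis.span_apply li i)
  set f : (Fin n → ℝ) →ₗ[ℝ] (Fin n → ℝ) := Matrix.toLin' A with hfdef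
  have hf : ∀ x, f x = A.mulVec x := fun x => Matrix.toLin'_apply A x
  set M0 := LinearMap.toMatrix B B f with hM0def
  -- the cyclic relation
  have htop : (A ^ d).mulVec v = ∑ i : Fin d, (-q.coeff i) • w i := by
    have h1 : aeval A q = ∑ i ∈ Finset.range (d + 1), q.coeff i • A ^ i :=
      aeval_eq_sum_range (p := q) A
    have h2 : (0 : Fin n → ℝ) = ∑ i ∈ Finset.range (d + 1), q.coeff i • (A ^ i).mulVec v := by
      rw [← hker, h1]
      rw [show (∑ i ∈ Finset.range (d+1), q.coeff i • A ^ i).mulVec v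
          = ∑ i ∈ Finset.range (d+1), (q.coeff i • A ^ i).mulVec v from
        map_sum (Matrix.mulVec.addMonoidHomLeft v) _ _]
      exact Finset.sum_congr rfl fun i _ => Matrix.smul_mulVec _ _ _
    rw [Finset.sum_range_succ] at h2
    have h3 : q.coeff d = 1 := hmo.coeff_natDegree
    rw [h3, one_smul] at h2
    have h4 : (A ^ d).mulVec v = -∑ i ∈ Finset.range d, q.coeff i • (A ^ i).mulVec v := by
      have h5 := h2.symm
      rw [add_eq_zero_iff_eq_neg] at h5
      rw [eq_neg_iff_add_eq_zero] at h5 ⊢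
      rw [← h5]; abel
    rw [h4, ← Finset.sum_neg_distrib, ← Fin.sum_univ_eq_sum_range
      (fun i => -(q.coeff i • (A ^ i).mulVec v)) d]
    exact Finset.sum_congr rfl fun i _ => (neg_smul _ _).symm
  -- column computations
  have hrepr : ∀ (k : Fin d ⊕ Fin m) (j : Fin d),
      M0 k (Sum.inl j) = Sum.elim (fun i : Fin d => compan q i j) (fun _ => (0:ℝ)) k := by
    intro k j
    rw [hM0def, LinearMap.toMatrix_apply, hBinl j, hf]
    have hfw : A.mulVec (w j) = (A ^ ((j:ℕ)+1)).mulVec v := by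
      rw [hwdef]; dsimp only; rw [Matrix.mulVec_mulVec, ← pow_succ']
    by_cases hj : (j:ℕ) + 1 = d
    · -- last column of the companion block
      have hsum2 : A.mulVec (w j) = ∑ i : Fin d, (-q.coeff i) • B (Sum.inl i) := by
        rw [hfw, hj, htop]
        exact Finset.sum_congr rfl fun i _ => by rw [hBinl]
      rw [hsum2, map_sum]
      have hone : ∀ i : Fin d, B.repr ((-q.coeff i) • B (Sum.inl i))
          = (-q.coeff i) • Finsupp.single (Sum.inl i) (1:ℝ) := by
        intro i; rw [_root_.map_smul, Module.Basis.repr_self]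
      simp only [hone]
      rw [Finset.sum_apply']
      simp only [Finsupp.smul_apply, Finsupp.single_apply, smul_eq_mul]
      cases k with
      | inl i0 =>
        have hcnd : ∀ i : Fin d,
            (if (Sum.inl i : Fin d ⊕ Fin m) = Sum.inl i0 then (1:ℝ) else 0)
            = if i = i0 then 1 else 0 := fun i => by simp [Sum.inl.injEq]
        simp only [hcnd, mul_ite, mul_one, mul_zero]
        rw [Finset.sum_ite_eq' Finset.univ i0 (fun i => -q.coeff i)]
        have hne : ¬ ((i0:ℕ) = (j:ℕ)+1) := by omega
        have hne' : ¬ ((i0:ℕ) = d) := by omega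
        simp [compan, hne, hne', hj, ← hd]
      | inr i0 =>
        simp
    · have hlt : (j:ℕ) + 1 < d := lt_of_le_of_ne (Nat.succ_le_of_lt j.isLt) hj
      have hstep : A.mulVec (w j) = B (Sum.inl ⟨(j:ℕ)+1, hlt⟩) := by
        rw [hfw, hBinl]
      rw [hstep, Module.Basis.repr_self, Finsupp.single_apply]
      cases k with
      | inl i0 =>
        by_cases hik : (i0:ℕ) = (j:ℕ)+1
        · rw [if_pos (congrArg Sum.inl (Fin.ext hik.symm))]
          simp [compan, hik]
        · rw [if_neg (fun hcon => hik (congrArg Fin.val (Sum.inl_injective hcon)).symm)]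
          simp [compan, hik, hj, ← hd]
      | inr i0 =>
        rw [if_neg (by simp)]
        simp
  set Xb : Matrix (Fin d) (Fin m) ℝ := Matrix.of fun i j => M0 (Sum.inl i) (Sum.inr j) with hXb
  set A' : Matrix (Fin m) (Fin m) ℝ := Matrix.of fun i j => M0 (Sum.inr i) (Sum.inr j) with hA'
  refine ⟨Xb, A', ?_⟩
  have hblock : M0 = fromBlocks (compan q) Xb 0 A' := by
    ext k l
    cases k with
    | inl i =>
      cases l with
      | inl j => rw [hrepr (Sum.inl i) j]; rfl
      | inr j => rfl
    | inr i =>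
      cases l with
      | inl j => rw [hrepr (Sum.inr i) j]; rfl
      | inr j => rfl
  set Bn := B.reindex e with hBn
  have hMn : reindex e e M0 = LinearMap.toMatrix Bn Bn f := by
    ext i j
    rw [hBn, LinearMap.toMatrix_apply, Module.Basis.reindex_apply, Module.Basis.repr_reindex_apply]
    rw [reindex_apply, submatrix_apply, hM0def, LinearMap.toMatrix_apply]
  set std := Pi.basisFun ℝ (Fin n) with hstd
  set Q := LinearMap.toMatrix Bn std LinearMap.id with hQ
  set Q' := LinearMap.toMatrix std Bn LinearMap.id with hQ'
  have hQ'Q : Q' * Q = 1 := by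
    rw [hQ, hQ', ← LinearMap.toMatrix_comp Bn std Bn LinearMap.id LinearMap.id]
    simp [LinearMap.toMatrix_id]
  have htmA : LinearMap.toMatrix std std f = A := by
    rw [hstd, LinearMap.toMatrix_eq_toMatrix', hfdef]
    exact LinearMap.toMatrix'_toLin' A
  have hconj : LinearMap.toMatrix Bn Bn f = Q' * A * Q := by
    have e1 : f = LinearMap.id.comp (f.comp LinearMap.id) := rfl
    rw [← htmA, hQ, hQ']
    conv_lhs => rw [e1]
    rw [LinearMap.toMatrix_comp Bn std Bn LinearMap.id (f.comp LinearMap.id),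
      LinearMap.toMatrix_comp Bn std std f LinearMap.id, Matrix.mul_assoc]
  have hdetQ' : IsUnit Q'.det :=
    IsUnit.of_mul_eq_one Q.det (by rw [← Matrix.det_mul, hQ'Q, Matrix.det_one])
  refine ⟨Q', hdetQ', ?_⟩
  rw [inv_eq_right_inv hQ'Q, ← hconj, ← hMn, hblock]

end


lemma main_aux (N : ℕ) : ∀ (n : ℕ), n ≤ N → ∀ (A B : Matrix (Fin n) (Fin n) ℝ),
    A.charpoly = B.charpoly →
    (closure (orbX A) ∩ closure (orbX B)).Nonempty := by
  induction N with
  | zero =>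
    intro n hn A B _
    have hn0 : n = 0 := Nat.le_zero.mp hn
    subst hn0
    have hAB : A = B := Subsingleton.elim A B
    exact ⟨A, subset_closure (orbX_self A), hAB ▸ subset_closure (orbX_self A)⟩
  | succ N ih =>
    intro n hn A B hcp
    by_cases hn0 : n = 0
    · subst hn0
      have hAB : A = B := Subsingleton.elim A B
      exact ⟨A, subset_closure (orbX_self A), hAB ▸ subset_closure (orbX_self A)⟩
    have hdegA : A.charpoly.degree ≠ 0 := by
      rw [Matrix.charpoly_degree_eq_dim, Fintype.card_fin]
      exact_mod_cast hn0
    set q0 := A.charpoly.factor with hq0def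
    have hq0 : Irreducible q0 := Polynomial.irreducible_factor _
    have hassoc : Associated q0 (q0 * Polynomial.C (q0.leadingCoeff)⁻¹) := by
      refine associated_mul_unit_right q0 _ (Polynomial.isUnit_C.mpr ?_)
      exact (isUnit_iff_ne_zero).2 (inv_ne_zero (leadingCoeff_ne_zero.mpr hq0.ne_zero))
    set q := q0 * Polynomial.C (q0.leadingCoeff)⁻¹ with hqdef
    have hqirr : Irreducible q := hassoc.irreducible hq0
    have hqmo : q.Monic := monic_mul_leadingCoeff_inv hq0.ne_zero
    have hqdvdA : q ∣ A.charpoly :=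
      dvd_trans hassoc.symm.dvd (Polynomial.factor_dvd_of_degree_ne_zero hdegA)
    have hqdvdB : q ∣ B.charpoly := hcp ▸ hqdvdA
    have hq1 : 0 < q.natDegree :=
      natDegree_pos_iff_degree_pos.2 (degree_pos_of_irreducible hqirr)
    obtain ⟨mA, hA, XA, A', hAmem⟩ := reduce A hqirr hqmo hqdvdA
    obtain ⟨mB, hB, XB, B', hBmem⟩ := reduce B hqirr hqmo hqdvdB
    have hmm : mB = mA := by omega
    subst hmm
    set e : (Fin q.natDegree ⊕ Fin mB) ≃ Fin n := finSumFinEquiv.trans (finCongr hA) with hedef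
    -- charpoly equality of the lower blocks
    have hcA : (compan q).charpoly * A'.charpoly = A.charpoly := by
      have h1 := charpoly_eq_of_mem_closure (subset_closure hAmem)
      rwa [Matrix.charpoly_reindex, charpoly_fromBlocks_zero₂₁] at h1
    have hcB : (compan q).charpoly * B'.charpoly = B.charpoly := by
      have h1 := charpoly_eq_of_mem_closure (subset_closure hBmem)
      rwa [Matrix.charpoly_reindex, charpoly_fromBlocks_zero₂₁] at h1
    have hA'B' : A'.charpoly = B'.charpoly :=
      mul_left_cancel₀ (Matrix.charpoly_monic (compan q)).ne_zero
        (by rw [hcA, hcB, hcp])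
    obtain ⟨Cc, hCcA, hCcB⟩ := ih mB (by omega) A' B' hA'B'
    refine ⟨reindex e e (fromBlocks (compan q) 0 0 Cc), ?_, ?_⟩
    · have h1 := killX (compan q) XA A'
      have h2 := extendBlock (A' := A') (compan q) hCcA
      have h3 := closure_orbX_subset h1 h2
      have h4 := closure_orbX_reindex e h3
      exact closure_orbX_subset (subset_closure hAmem) h4
    · have h1 := killX (compan q) XB B'
      have h2 := extendBlock (A' := B') (compan q) hCcB
      have h3 := closure_orbX_subset h1 h2
      have h4 := closure_orbX_reindex e h3
      exact closure_orbX_subset (subset_closure hBmem) h4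

theorem stmt_8 (n : ℕ) (A B : Matrix (Fin n) (Fin n) ℝ) :
    (closure {M : Matrix (Fin n) (Fin n) ℝ | ∃ R : Matrix (Fin n) (Fin n) ℝ,
        IsUnit R.det ∧ M = R * A * R⁻¹} ∩
      closure {M : Matrix (Fin n) (Fin n) ℝ | ∃ R : Matrix (Fin n) (Fin n) ℝ,
        IsUnit R.det ∧ M = R * B * R⁻¹}).Nonempty ↔
    A.charpoly = B.charpoly := by
  constructor
  · rintro ⟨M, hMA, hMB⟩
    rw [← charpoly_eq_of_mem_closure (A := A) hMA, ← charpoly_eq_of_mem_closure (A := B) hMB]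
  · intro h
    exact main_aux n n le_rfl A B h
end

section
/- Let M = [[A,B],[C,Aᵀ]] ∈ Sp^𝓘(4) with A having a real eigenvalue μ with |μ| < 1. Then λ = μ + i√(1-μ²) is an eigenvalue of M (as a complex matrix), and |λ| = 1. -/
/-!
If `Aᵀ u = μ u` and `λ² + 1 = 2μλ`, then `w = (B u, (λ - μ) u)` satisfies `M w = λ w`:
`AB = BAᵀ` settles the upper block, and `CB = AᵀAᵀ - 1` (the transpose of `A² - BC = 1`)
reduces the lower block to `λ² + 1 = 2μλ`. For `|μ| < 1` the root `λ = μ + i√(1 - μ²)` lies on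
the unit circle and differs from `μ`, so `w ≠ 0`.
-/

open Matrix

namespace Matrix

variable {n : Type*} [Fintype n] [DecidableEq n]

theorem exists_mulVec_eq_smul_iff_eval_charpoly {K : Type*} [Field K] {M : Matrix n n K}
    {t : K} : (∃ v ≠ 0, M *ᵥ v = t • v) ↔ M.charpoly.eval t = 0 := by
  rw [eval_charpoly, ← exists_mulVec_eq_zero_iff]
  simp only [sub_mulVec, scalar_apply, ← smul_one_eq_diagonal, smul_mulVec, one_mulVec,
    sub_eq_zero, eq_comm]

theorem exists_map_transpose_mulVec_eq_smul {K L : Type*} [Field K] [Field L] (f : K →+* L)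
    {A : Matrix n n K} {μ : K} (h : ∃ v ≠ 0, A *ᵥ v = μ • v) :
    ∃ u ≠ 0, (A.map f)ᵀ *ᵥ u = f μ • u := by
  rw [exists_mulVec_eq_smul_iff_eval_charpoly] at h ⊢
  rw [charpoly_transpose, charpoly_map, Polynomial.eval_map_apply, h, map_zero]

theorem mul_eq_transpose_mul_transpose_sub_one {R : Type*} [CommRing R] {A B C : Matrix n n R}
    (hB : Bᵀ = B) (hC : Cᵀ = C) (hABC : A * A - B * C = 1) : C * B = Aᵀ * Aᵀ - 1 := by
  have h := congrArg transpose hABC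
  rw [transpose_sub, transpose_mul, transpose_mul, hB, hC, transpose_one] at h
  rw [← h]
  abel

theorem fromBlocks_mulVec_eq_smul {R : Type*} [CommRing R] {A B C : Matrix n n R}
    (hAB : A * B = B * Aᵀ) (hCB : C * B = Aᵀ * Aᵀ - 1) {μ t : R} {u : n → R}
    (hu : Aᵀ *ᵥ u = μ • u) (ht : t ^ 2 + 1 = 2 * μ * t) :
    fromBlocks A B C Aᵀ *ᵥ Sum.elim (B *ᵥ u) ((t - μ) • u) =
      t • Sum.elim (B *ᵥ u) ((t - μ) • u) := by
  have hABu : A *ᵥ B *ᵥ u = μ • B *ᵥ u := by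
    rw [mulVec_mulVec, hAB, ← mulVec_mulVec, hu, mulVec_smul]
  have hCBu : C *ᵥ B *ᵥ u = (μ ^ 2 - 1) • u := by
    rw [mulVec_mulVec, hCB, sub_mulVec, ← mulVec_mulVec, hu, mulVec_smul, hu, one_mulVec,
      smul_smul, sub_smul, one_smul, sq]
  have htop : μ • B *ᵥ u + (t - μ) • B *ᵥ u = t • B *ᵥ u := by module
  have hbot : (μ ^ 2 - 1) • u + (t - μ) • μ • u = t • (t - μ) • u := by
    linear_combination (norm := module) -(ht • u)
  rw [fromBlocks_mulVec, Sum.elim_comp_inl, Sum.elim_comp_inr, mulVec_smul, mulVec_smul, hABu,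
    hCBu, hu, htop, hbot]
  ext (i | i) <;> rfl

theorem exists_fromBlocks_mulVec_eq_smul {K : Type*} [Field K] {A B C : Matrix n n K}
    (hAB : A * B = B * Aᵀ) (hCB : C * B = Aᵀ * Aᵀ - 1) {μ t : K}
    (hμ : ∃ u ≠ 0, Aᵀ *ᵥ u = μ • u) (ht : t ^ 2 + 1 = 2 * μ * t) (htμ : t ≠ μ) :
    ∃ w ≠ 0, fromBlocks A B C Aᵀ *ᵥ w = t • w := by
  obtain ⟨u, hu0, hu⟩ := hμ
  refine ⟨_, fun hw ↦ ?_, fromBlocks_mulVec_eq_smul hAB hCB hu ht⟩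
  exact smul_ne_zero (sub_ne_zero.2 htμ) hu0 (by simpa using congrArg (· ∘ Sum.inr) hw)

end Matrix

namespace Complex

variable {μ : ℝ}

theorem norm_ofReal_add_sqrt_one_sub_sq_mul_I (hμ : |μ| ≤ 1) :
    ‖(μ : ℂ) + √(1 - μ ^ 2) * I‖ = 1 := by
  rw [norm_add_mul_I, Real.sq_sqrt (by simpa using hμ)]
  simp

theorem ofReal_add_sqrt_one_sub_sq_mul_I_sq_add_one (hμ : |μ| ≤ 1) :
    ((μ : ℂ) + √(1 - μ ^ 2) * I) ^ 2 + 1 = 2 * μ * ((μ : ℂ) + √(1 - μ ^ 2) * I) := by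
  have hs : ((√(1 - μ ^ 2) : ℝ) : ℂ) ^ 2 = 1 - μ ^ 2 := by
    exact_mod_cast Real.sq_sqrt (by simpa using hμ)
  linear_combination (((√(1 - μ ^ 2) : ℝ) : ℂ)) ^ 2 * I_sq - hs

theorem ofReal_add_sqrt_one_sub_sq_mul_I_ne (hμ : |μ| < 1) :
    (μ : ℂ) + √(1 - μ ^ 2) * I ≠ μ := by
  intro h
  have hs : √(1 - μ ^ 2) = 0 := by simpa using congrArg im h
  rw [Real.sqrt_eq_zero', sub_nonpos, ← not_lt, sq_lt_one_iff_abs_lt_one] at hs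
  exact hs hμ

end Complex

theorem stmt_15_general (A B C : Matrix (Fin 2) (Fin 2) ℝ)
    (hB : Bᵀ = B) (hC : Cᵀ = C)
    (hAB : A * B = B * Aᵀ)
    (hABC : A * A - B * C = 1)
    (μ : ℝ) (hμ : |μ| < 1)
    (heig : ∃ v : Fin 2 → ℝ, v ≠ 0 ∧ A.mulVec v = μ • v) :
    let lam : ℂ := μ + Real.sqrt (1 - μ ^ 2) * Complex.I
    ‖lam‖ = 1 ∧
    ((fromBlocks A B C Aᵀ).map (Complex.ofReal)).charpoly.eval lam = 0 := by
  intro lam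
  refine ⟨Complex.norm_ofReal_add_sqrt_one_sub_sq_mul_I hμ.le, ?_⟩
  have hCB := mul_eq_transpose_mul_transpose_sub_one hB hC hABC
  have hABc : A.map Complex.ofRealHom * B.map Complex.ofRealHom =
      B.map Complex.ofRealHom * (A.map Complex.ofRealHom)ᵀ := by
    simpa only [map_mul, RingHom.mapMatrix_apply, transpose_map] using
      congrArg Complex.ofRealHom.mapMatrix hAB
  have hCBc : C.map Complex.ofRealHom * B.map Complex.ofRealHom =
      (A.map Complex.ofRealHom)ᵀ * (A.map Complex.ofRealHom)ᵀ - 1 := by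
    simpa only [map_sub, map_mul, map_one, RingHom.mapMatrix_apply, transpose_map] using
      congrArg Complex.ofRealHom.mapMatrix hCB
  rw [fromBlocks_map, transpose_map, ← exists_mulVec_eq_smul_iff_eval_charpoly]
  exact exists_fromBlocks_mulVec_eq_smul hABc hCBc
    (exists_map_transpose_mulVec_eq_smul Complex.ofRealHom heig)
    (Complex.ofReal_add_sqrt_one_sub_sq_mul_I_sq_add_one hμ.le)
    (Complex.ofReal_add_sqrt_one_sub_sq_mul_I_ne hμ)

theorem stmt_15 (A B C : Matrix (Fin 2) (Fin 2) ℝ)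
    (hB : Bᵀ = B) (hC : Cᵀ = C)
    (hAB : A * B = B * Aᵀ) (hAC : Aᵀ * C = C * A)
    (hABC : A * A - B * C = 1)
    (μ : ℝ) (hμ : |μ| < 1)
    (heig : ∃ v : Fin 2 → ℝ, v ≠ 0 ∧ A.mulVec v = μ • v) :
    let lam : ℂ := μ + Real.sqrt (1 - μ ^ 2) * Complex.I
    ‖lam‖ = 1 ∧
    ((fromBlocks A B C Aᵀ).map (Complex.ofReal)).charpoly.eval lam = 0 :=
  stmt_15_general A B C hB hC hAB hABC μ hμ heig
end
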